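/- arXiv:0805.2377 — 3 statements merged into one kernel-verified Lean document; each statement's English description precedes it below -/
import Mathlib

section
/- (Kostant duality) For any k-algebra A and any k-coalgebra C there is a natural bijection between algebra homomorphisms A → C* and coalgebra homomorphisms C → A^o, given by sending φ : A → C* to the map c ↦ (a ↦ φ(a)(c)). -/
/-!
Transposition `φ ↦ φ.flip` is a bijection between bilinear pairings of `A` and `C`; under it,
multiplicativity into the convolution algebra `C*` is exactly compatibility with the
comultiplication, and unitality is counitality. The only real content is that for multiplicative
`φ` each functional `a ↦ φ(a)(c)` lies in `A^o`. Writing `Δc = ∑ c₁ ⊗ c₂` and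
`Δc₂ = ∑ c₂₁ ⊗ c₂₂`, the value `φ(xay)(c) = ∑ φ(x)(c₁) φ(a)(c₂₁) φ(y)(c₂₂)` vanishes for all
`x, y` as soon as `φ(a)` vanishes on the finitely many `c₂₁`. That condition on `a` has finite
codimension, so the largest two-sided ideal inside `ker (a ↦ φ(a)(c))` has finite codimension.
-/

open TensorProduct

/-- The convolution product on the dual of a coalgebra. -/
noncomputable def conv {k C : Type*} [Field k] [AddCommGroup C] [Module k C]
    [Coalgebra k C] (f g : Module.Dual k C) : Module.Dual k C :=
  (TensorProduct.lid k k).toLinearMap ∘ₗ TensorProduct.map f g ∘ₗ Coalgebra.comul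

/-- `f ∈ A^o` : the kernel of `f` contains a two-sided ideal of finite codimension. -/
def memFiniteDual (k A : Type*) [Field k] [Ring A] [Algebra k A]
    (f : Module.Dual k A) : Prop :=
  ∃ I : Submodule k A, (∀ (a : A), ∀ x ∈ I, a * x ∈ I) ∧ (∀ (a : A), ∀ x ∈ I, x * a ∈ I) ∧
    FiniteDimensional k (A ⧸ I) ∧ ∀ x ∈ I, f x = 0

section Convolution

variable {k C : Type*} [Field k] [AddCommGroup C] [Module k C] [Coalgebra k C]

lemma conv_apply_eq_sum {ι : Type*} {c : C} (r : Coalgebra.Repr k c ι) (f g : Module.Dual k C) :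
    conv f g c = ∑ i ∈ r.index, f (r.left i) * g (r.right i) := by
  simp [conv, ← r.eq, smul_eq_mul]

open Coalgebra in
lemma exists_finset_conv_conv_eq_zero (c : C) :
    ∃ s : Finset C, ∀ f g h : Module.Dual k C, (∀ d ∈ s, g d = 0) → conv f (conv g h) c = 0 := by
  classical
  let r := ℛ k c
  let r' := fun i => ℛ k (r.right i)
  refine ⟨r.index.biUnion fun i => (r' i).index.image (r' i).left, fun f g h hg => ?_⟩
  rw [conv_apply_eq_sum r]
  refine Finset.sum_eq_zero fun i hi => ?_
  rw [conv_apply_eq_sum (r' i), Finset.sum_eq_zero fun j hj => ?_, mul_zero]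
  rw [hg _ (Finset.mem_biUnion.2 ⟨i, hi, Finset.mem_image_of_mem _ hj⟩), zero_mul]

end Convolution

section FiniteDual

variable {k A : Type*} [Field k] [Ring A] [Algebra k A]

/-- The largest two-sided ideal of `A` contained in `ker f`. -/
def twoSidedKer (f : Module.Dual k A) : Submodule k A where
  carrier := {a | ∀ x y : A, f (x * a * y) = 0}
  add_mem' ha hb x y := by simp [mul_add, add_mul, ha x y, hb x y]
  zero_mem' x y := by simp
  smul_mem' r a ha x y := by simp [ha x y]

lemma memFiniteDual_of_le_twoSidedKer {f : Module.Dual k A} (J : Submodule k A)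
    [FiniteDimensional k (A ⧸ J)] (hJ : J ≤ twoSidedKer f) : memFiniteDual k A f := by
  refine ⟨twoSidedKer f, fun b a ha x y => ?_, fun b a ha x y => ?_,
    Module.Finite.of_surjective _ (Submodule.factor_surjective hJ), fun a ha => ?_⟩
  · simpa [mul_assoc] using ha (x * b) y
  · simpa [mul_assoc] using ha x (b * y)
  · simpa using ha 1 1

end FiniteDual

section KostantDuality

variable {k A C : Type*} [Field k] [Ring A] [Algebra k A] [AddCommGroup C] [Module k C]
  [Coalgebra k C]

lemma memFiniteDual_flip_of_map_mul (Φ : A →ₗ[k] Module.Dual k C)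
    (hΦ : ∀ x y : A, Φ (x * y) = conv (Φ x) (Φ y)) (c : C) :
    memFiniteDual k A (Φ.flip c) := by
  obtain ⟨s, hs⟩ := exists_finset_conv_conv_eq_zero (k := k) c
  let evalOn : A →ₗ[k] (s → k) := LinearMap.pi fun d => Φ.flip d
  have : FiniteDimensional k (A ⧸ LinearMap.ker evalOn) :=
    Module.Finite.equiv evalOn.quotKerEquivRange.symm
  refine memFiniteDual_of_le_twoSidedKer (LinearMap.ker evalOn) fun a ha x y => ?_
  have hvanish : ∀ d ∈ s, Φ a d = 0 := fun d hd => congr_fun (LinearMap.mem_ker.1 ha) ⟨d, hd⟩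
  simpa [mul_assoc, hΦ] using hs (Φ x) (Φ a) (Φ y) hvanish

lemma lid_comp_map_applyₗ_comp_map_comp_comul_apply (Ψ : C →ₗ[k] Module.Dual k A) (a b : A)
    (c : C) :
    ((TensorProduct.lid k k).toLinearMap ∘ₗ
      TensorProduct.map (LinearMap.applyₗ a) (LinearMap.applyₗ b) ∘ₗ
      TensorProduct.map Ψ Ψ ∘ₗ Coalgebra.comul) c = conv (Ψ.flip a) (Ψ.flip b) c := by
  simp only [conv, LinearMap.comp_apply, ← LinearMap.comp_apply (TensorProduct.map _ _)
    (TensorProduct.map Ψ Ψ), ← TensorProduct.map_comp]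
  rfl

end KostantDuality

/-- (Kostant duality) The map `φ ↦ (c ↦ (a ↦ φ(a)(c)))` is a bijection from the set of
algebra homomorphisms `A → C*` (`C*` with the convolution product and unit the counit)
onto the set of coalgebra homomorphisms `C → A^o` (`A^o` with comultiplication dual to
the multiplication of `A` and counit `f ↦ f(1)`). -/
theorem kostant_duality (k A C : Type*) [Field k] [Ring A] [Algebra k A]
    [AddCommGroup C] [Module k C] [Coalgebra k C] :
    Set.BijOn (fun Φ : A →ₗ[k] Module.Dual k C => Φ.flip)
      {Φ : A →ₗ[k] Module.Dual k C |
        Φ 1 = Coalgebra.counit ∧ ∀ x y : A, Φ (x * y) = conv (Φ x) (Φ y)}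
      {Ψ : C →ₗ[k] Module.Dual k A |
        (∀ c : C, memFiniteDual k A (Ψ c)) ∧
        (∀ c : C, Ψ c 1 = Coalgebra.counit c) ∧
        (∀ (c : C) (a b : A), Ψ c (a * b) =
          ((TensorProduct.lid k k).toLinearMap ∘ₗ
            TensorProduct.map (LinearMap.applyₗ a) (LinearMap.applyₗ b) ∘ₗ
            TensorProduct.map Ψ Ψ ∘ₗ Coalgebra.comul) c)} := by
  refine ⟨?_, fun Φ _ Φ' _ h => LinearMap.flip_inj h, ?_⟩
  · rintro Φ ⟨hunit, hmul⟩
    refine ⟨memFiniteDual_flip_of_map_mul Φ hmul, fun c => LinearMap.congr_fun hunit c,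
      fun c a b => ?_⟩
    rw [lid_comp_map_applyₗ_comp_map_comp_comul_apply, LinearMap.flip_flip]
    exact LinearMap.congr_fun (hmul a b) c
  · rintro Ψ ⟨-, hunit, hmul⟩
    refine ⟨Ψ.flip, ⟨LinearMap.ext hunit, fun x y => LinearMap.ext fun c => ?_⟩, Ψ.flip_flip⟩
    rw [LinearMap.flip_apply, hmul, lid_comp_map_applyₗ_comp_map_comp_comul_apply]
end

section
/- Every k-coalgebra is the directed union (direct limit) of its finite-dimensional subcoalgebras; in particular every element of a coalgebra is contained in a finite-dimensional subcoalgebra. -/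
/-!
For `c ∈ C` consider `E = C* ⇀ c ↼ C*`, the span of the elements `∑ f c₍₁₎ • g c₍₃₎ • c₍₂₎` for
functionals `f g` on `C`. Coassociativity makes `E` stable under both actions of the dual algebra
`C*` on `C`, and the counit shows `c ∈ E`. Over a field, `s ∈ C ⊗ C` lies in `C ⊗ E` as soon as
all its contractions `(f ⊗ id) s` lie in `E`, and `(E ⊗ C) ∩ (C ⊗ E) = E ⊗ E`; hence stability
under both actions is exactly `Δ E ⊆ E ⊗ E`. If `Δ c = ∑ aᵢ ⊗ bᵢ` and `Δ aᵢ = ∑ aᵢⱼ ⊗ bᵢⱼ`, then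
`E` lies in the span of the `bᵢⱼ`, so it is finite-dimensional. Directedness holds because a sum
of subcoalgebras is a subcoalgebra.
-/

open TensorProduct

/-- A subspace `E` of a coalgebra `C` is a subcoalgebra if `Δ(E) ⊆ E ⊗ E`. -/
def IsSubcoalgebra {k C : Type*} [Field k] [AddCommGroup C] [Module k C] [Coalgebra k C]
    (E : Submodule k C) : Prop :=
  ∀ x ∈ E, Coalgebra.comul (R := k) x ∈ LinearMap.range (TensorProduct.map E.subtype E.subtype)

open LinearMap

namespace TensorProduct

section Contraction

variable {R M N P : Type*} [CommSemiring R] [AddCommMonoid M] [Module R M] [AddCommMonoid N]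
  [Module R N] [AddCommMonoid P] [Module R P]

theorem lid_rTensor_lTensor (f : Module.Dual R M) (φ : N →ₗ[R] P) (s : M ⊗[R] N) :
    TensorProduct.lid R P (f.rTensor P (φ.lTensor M s)) =
      φ (TensorProduct.lid R N (f.rTensor N s)) := by
  induction s using TensorProduct.induction_on <;> simp_all

theorem rid_lTensor_rTensor (g : Module.Dual R N) (φ : M →ₗ[R] P) (s : M ⊗[R] N) :
    TensorProduct.rid R P (g.lTensor P (φ.rTensor N s)) =
      φ (TensorProduct.rid R M (g.lTensor M s)) := by
  induction s using TensorProduct.induction_on <;> simp_all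

theorem rid_lTensor_eq_lid_rTensor_comm (g : Module.Dual R N) (s : M ⊗[R] N) :
    TensorProduct.rid R M (g.lTensor M s) =
      TensorProduct.lid R M (g.rTensor M (TensorProduct.comm R M N s)) := by
  induction s using TensorProduct.induction_on <;> simp_all

theorem eq_zero_of_forall_lid_rTensor_eq_zero [Module.Free R M] {t : M ⊗[R] N}
    (h : ∀ f : Module.Dual R M, TensorProduct.lid R N (f.rTensor N t) = 0) : t = 0 := by
  classical
  let b := Module.Free.chooseBasis R M
  refine (equivFinsuppOfBasisLeft b).injective (Finsupp.ext fun i => ?_)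
  rw [equivFinsuppOfBasisLeft_apply, h, map_zero, Finsupp.coe_zero, Pi.zero_apply]

variable (ω : (M ⊗[R] N) ⊗[R] P)

theorem lid_rTensor_rid_lTensor (f : Module.Dual R M) (g : Module.Dual R P) :
    TensorProduct.lid R N (f.rTensor N (TensorProduct.rid R (M ⊗[R] N) (g.lTensor _ ω))) =
      TensorProduct.rid R N (g.lTensor N
        (TensorProduct.lid R (N ⊗[R] P) (f.rTensor _ (TensorProduct.assoc R M N P ω)))) := by
  induction ω using TensorProduct.induction_on with
  | zero => simp
  | add _ _ ih ih' => simp [ih, ih']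
  | tmul x p =>
    induction x using TensorProduct.induction_on <;> simp_all [add_tmul, smul_smul, mul_comm]

theorem lid_rTensor_lid_rTensor_assoc (f : Module.Dual R M) (h : Module.Dual R N) :
    TensorProduct.lid R P (h.rTensor P
        (TensorProduct.lid R (N ⊗[R] P) (f.rTensor _ (TensorProduct.assoc R M N P ω)))) =
      TensorProduct.lid R P ((f ∘ₗ TensorProduct.rid R M ∘ₗ h.lTensor M).rTensor P ω) := by
  induction ω using TensorProduct.induction_on with
  | zero => simp
  | add _ _ ih ih' => simp [ih, ih']
  | tmul x p =>
    induction x using TensorProduct.induction_on <;> simp_all [add_tmul, smul_smul, mul_comm]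

theorem rid_lTensor_rid_lTensor (g : Module.Dual R P) (h : Module.Dual R N) :
    TensorProduct.rid R M (h.lTensor M (TensorProduct.rid R (M ⊗[R] N) (g.lTensor _ ω))) =
      TensorProduct.rid R M ((g ∘ₗ TensorProduct.lid R P ∘ₗ h.rTensor P).lTensor M
        (TensorProduct.assoc R M N P ω)) := by
  induction ω using TensorProduct.induction_on with
  | zero => simp
  | add _ _ ih ih' => simp [ih, ih']
  | tmul x p =>
    induction x using TensorProduct.induction_on <;> simp_all [add_tmul, smul_smul, mul_comm]

end Contraction

theorem exists_finite_map_le_range_lTensor {R M V W : Type*} [CommSemiring R] [AddCommMonoid M]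
    [Module R M] [AddCommMonoid V] [Module R V] [AddCommMonoid W] [Module R W]
    (φ : M →ₗ[R] V ⊗[R] W) {A : Submodule R M} (hA : A.FG) :
    ∃ F : Submodule R W, Module.Finite R F ∧ A.map φ ≤ range (F.subtype.lTensor V) := by
  obtain ⟨S, rfl⟩ := hA
  obtain ⟨F, hF, hS⟩ :=
    exists_finite_submodule_right_of_setFinite (φ '' S) (S.finite_toSet.image φ)
  exact ⟨F, hF, by rwa [Submodule.map_span, Submodule.span_le]⟩

section Free

variable {R V W : Type*} [CommRing R] [AddCommGroup V] [Module R V] [AddCommGroup W] [Module R W]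

theorem mem_range_lTensor_subtype_iff [Module.Free R V] (D : Submodule R W) (s : V ⊗[R] W) :
    s ∈ range (D.subtype.lTensor V) ↔
      ∀ f : Module.Dual R V, TensorProduct.lid R W (f.rTensor W s) ∈ D := by
  constructor
  · rintro ⟨s, rfl⟩ f
    rw [lid_rTensor_lTensor]
    exact Submodule.coe_mem _
  · intro h
    rw [← lTensor_mkQ]
    exact eq_zero_of_forall_lid_rTensor_eq_zero fun f => by
      rw [lid_rTensor_lTensor, Submodule.mkQ_apply, Submodule.Quotient.mk_eq_zero]
      exact h f

theorem mem_range_rTensor_subtype_iff [Module.Free R W] (D : Submodule R V) (s : V ⊗[R] W) :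
    s ∈ range (D.subtype.rTensor W) ↔
      ∀ g : Module.Dual R W, TensorProduct.rid R V (g.lTensor V s) ∈ D := by
  have hcomm : s ∈ range (D.subtype.rTensor W) ↔
      TensorProduct.comm R V W s ∈ range (D.subtype.lTensor W) := by
    constructor
    · rintro ⟨t, rfl⟩
      exact ⟨TensorProduct.comm R D W t, lTensor_comm _ _⟩
    · rintro ⟨t, ht⟩
      refine ⟨(TensorProduct.comm R D W).symm t, (TensorProduct.comm R V W).injective ?_⟩
      rw [← ht, ← lTensor_comm, LinearEquiv.apply_symm_apply]
  simp only [hcomm, mem_range_lTensor_subtype_iff, rid_lTensor_eq_lid_rTensor_comm]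

end Free

theorem range_map_subtype_eq_inf {K V W : Type*} [Field K] [AddCommGroup V] [Module K V]
    [AddCommGroup W] [Module K W] (D : Submodule K V) (D' : Submodule K W) :
    range (map D.subtype D'.subtype) =
      range (D.subtype.rTensor W) ⊓ range (D'.subtype.lTensor V) := by
  refine le_antisymm (le_inf ?_ ?_) ?_
  · rw [← rTensor_comp_lTensor]; exact range_comp_le_range _ _
  · rw [← lTensor_comp_rTensor]; exact range_comp_le_range _ _
  rintro s ⟨⟨s₁, hs₁⟩, ⟨s₂, rfl⟩⟩
  obtain ⟨q, hq⟩ := D.subtype.exists_leftInverse_of_injective D.ker_subtype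
  have hproj :
      (D.subtype ∘ₗ q).rTensor W (D'.subtype.lTensor V s₂) = D'.subtype.lTensor V s₂ := by
    rw [← hs₁, ← comp_apply, ← rTensor_comp, comp_assoc, hq, comp_id]
  refine ⟨q.rTensor D' s₂, ?_⟩
  rw [← hproj, ← comp_apply, ← comp_apply, rTensor_comp_lTensor, ← map_comp_rTensor]

end TensorProduct

namespace Coalgebra

section CommSemiring

variable {R C : Type*} [CommSemiring R] [AddCommMonoid C] [Module R C] [Coalgebra R C]

/-- `x ↦ ∑ f x₍₁₎ • x₍₂₎`, the right action `x ↼ f` of the dual algebra. -/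
noncomputable def applyLeft (f : Module.Dual R C) : C →ₗ[R] C :=
  _root_.TensorProduct.lid R C ∘ₗ f.rTensor C ∘ₗ comul

/-- `x ↦ ∑ g x₍₂₎ • x₍₁₎`, the left action `g ⇀ x` of the dual algebra. -/
noncomputable def applyRight (g : Module.Dual R C) : C →ₗ[R] C :=
  _root_.TensorProduct.rid R C ∘ₗ g.lTensor C ∘ₗ comul

theorem applyLeft_counit (x : C) : applyLeft (counit (R := R)) x = x := by
  simp [applyLeft, rTensor_counit_comul (R := R)]

theorem applyRight_counit (x : C) : applyRight (counit (R := R)) x = x := by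
  simp [applyRight, lTensor_counit_comul (R := R)]

theorem applyLeft_applyRight (f g : Module.Dual R C) (x : C) :
    applyLeft f (applyRight g x) = applyRight g (applyLeft f x) := by
  simp only [applyLeft, applyRight, comp_apply, LinearEquiv.coe_coe]
  rw [← rid_lTensor_rTensor g comul, ← lid_rTensor_lTensor f comul, ← coassoc_apply,
    lid_rTensor_rid_lTensor]

theorem applyLeft_applyLeft (f h : Module.Dual R C) (x : C) :
    applyLeft h (applyLeft f x) = applyLeft (f ∘ₗ applyRight h) x := by
  simp only [applyLeft, applyRight, comp_apply, LinearEquiv.coe_coe]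
  rw [← lid_rTensor_lTensor f comul, ← coassoc_apply, lid_rTensor_lid_rTensor_assoc]
  simp only [rTensor_comp, comp_apply]

theorem applyRight_applyRight (g h : Module.Dual R C) (x : C) :
    applyRight h (applyRight g x) = applyRight (g ∘ₗ applyLeft h) x := by
  simp only [applyLeft, applyRight, comp_apply, LinearEquiv.coe_coe]
  rw [← rid_lTensor_rTensor g comul, rid_lTensor_rid_lTensor, coassoc_apply]
  simp only [lTensor_comp, comp_apply]

end CommSemiring

section Field

variable {k C : Type*} [Field k] [AddCommGroup C] [Module k C] [Coalgebra k C]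

theorem _root_.isSubcoalgebra_iff (E : Submodule k C) :
    IsSubcoalgebra E ↔
      ∀ x ∈ E, ∀ f : Module.Dual k C, applyLeft f x ∈ E ∧ applyRight f x ∈ E := by
  simp only [IsSubcoalgebra, range_map_subtype_eq_inf, Submodule.mem_inf,
    mem_range_lTensor_subtype_iff, mem_range_rTensor_subtype_iff, applyLeft, applyRight,
    comp_apply, LinearEquiv.coe_coe, forall_and, and_comm]

theorem _root_.IsSubcoalgebra.sup {E F : Submodule k C} (hE : IsSubcoalgebra E)
    (hF : IsSubcoalgebra F) : IsSubcoalgebra (E ⊔ F) := by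
  intro z hz
  obtain ⟨e, he, f, hf, rfl⟩ := Submodule.mem_sup.mp hz
  rw [map_add]
  exact add_mem (range_mapIncl_mono le_sup_left le_sup_left (hE e he))
    (range_mapIncl_mono le_sup_right le_sup_right (hF f hf))

variable (k) in
/-- `C* ⇀ c ↼ C*`, spanned by the elements `∑ f c₍₁₎ • g c₍₃₎ • c₍₂₎`. -/
noncomputable def applySpan (c : C) : Submodule k C :=
  Submodule.span k (Set.range fun p : Module.Dual k C × Module.Dual k C =>
    applyLeft p.1 (applyRight p.2 c))

theorem mem_applySpan_self (c : C) : c ∈ applySpan k c := by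
  have hmem : applyLeft counit (applyRight counit c) ∈ applySpan k c :=
    Submodule.subset_span ⟨(counit, counit), rfl⟩
  rwa [applyRight_counit, applyLeft_counit] at hmem

theorem applyLeft_mem_applySpan {c x : C} (hx : x ∈ applySpan k c) (h : Module.Dual k C) :
    applyLeft h x ∈ applySpan k c := by
  refine (show (applySpan k c).map (applyLeft h) ≤ applySpan k c from ?_) ⟨x, hx, rfl⟩
  rw [applySpan, Submodule.map_span, Submodule.span_le]
  rintro _ ⟨_, ⟨⟨f, g⟩, rfl⟩, rfl⟩
  exact Submodule.subset_span ⟨(f ∘ₗ applyRight h, g), (applyLeft_applyLeft _ _ _).symm⟩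

theorem applyRight_mem_applySpan {c x : C} (hx : x ∈ applySpan k c) (h : Module.Dual k C) :
    applyRight h x ∈ applySpan k c := by
  refine (show (applySpan k c).map (applyRight h) ≤ applySpan k c from ?_) ⟨x, hx, rfl⟩
  rw [applySpan, Submodule.map_span, Submodule.span_le]
  rintro _ ⟨_, ⟨⟨f, g⟩, rfl⟩, rfl⟩
  refine Submodule.subset_span ⟨(f, g ∘ₗ applyLeft h), ?_⟩
  simp only [← applyRight_applyRight, applyLeft_applyRight]

theorem isSubcoalgebra_applySpan (c : C) : IsSubcoalgebra (applySpan k c) :=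
  (isSubcoalgebra_iff _).mpr fun _ hx f =>
    ⟨applyLeft_mem_applySpan hx f, applyRight_mem_applySpan hx f⟩

theorem finiteDimensional_applySpan (c : C) : FiniteDimensional k (applySpan k c) := by
  obtain ⟨A, hA, hcA⟩ :=
    exists_finite_submodule_left_of_setFinite {comul (R := k) c} (Set.finite_singleton _)
  obtain ⟨F, hF, hAF⟩ := exists_finite_map_le_range_lTensor comul (Module.Finite.iff_fg.mp hA)
  refine Submodule.finiteDimensional_of_le (show applySpan k c ≤ F from ?_)
  rw [applySpan, Submodule.span_le]
  rintro _ ⟨⟨f, g⟩, rfl⟩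
  have hgA : applyRight g c ∈ A := (mem_range_rTensor_subtype_iff A _).mp (hcA rfl) g
  exact (mem_range_lTensor_subtype_iff F _).mp (hAF ⟨_, hgA, rfl⟩) f

end Field

end Coalgebra

/-- (Fundamental Theorem of Coalgebras) Every `k`-coalgebra is the directed union of its
finite-dimensional subcoalgebras: every element lies in a finite-dimensional subcoalgebra,
the family of finite-dimensional subcoalgebras is directed under inclusion, and its
supremum is everything. -/
theorem coalgebra_directed_union_of_finiteDimensional_subcoalgebras
    (k C : Type*) [Field k] [AddCommGroup C] [Module k C] [Coalgebra k C] :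
    (∀ c : C, ∃ E : Submodule k C, IsSubcoalgebra E ∧ FiniteDimensional k E ∧ c ∈ E) ∧
    (DirectedOn (· ≤ ·) {E : Submodule k C | IsSubcoalgebra E ∧ FiniteDimensional k E}) ∧
    sSup {E : Submodule k C | IsSubcoalgebra E ∧ FiniteDimensional k E} = ⊤ := by
  have hexists (c : C) :
      ∃ E : Submodule k C, IsSubcoalgebra E ∧ FiniteDimensional k E ∧ c ∈ E :=
    ⟨Coalgebra.applySpan k c, Coalgebra.isSubcoalgebra_applySpan c,
      Coalgebra.finiteDimensional_applySpan c, Coalgebra.mem_applySpan_self c⟩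
  refine ⟨hexists, ?_, ?_⟩
  · rintro E ⟨hE, hEfin⟩ F ⟨hF, hFfin⟩
    exact ⟨E ⊔ F, ⟨hE.sup hF, Submodule.finiteDimensional_sup E F⟩, le_sup_left, le_sup_right⟩
  · refine eq_top_iff.mpr fun c _ => ?_
    obtain ⟨E, hE, hEfin, hcE⟩ := hexists c
    exact Submodule.mem_sSup_of_mem (by exact ⟨hE, hEfin⟩) hcE
end

section
/- Let A be a commutative finitely generated algebra over a field k. Then A is proper, i.e., the dual coalgebra A^o is dense in A* (equivalently, the natural map A → (A^o)* is injective): for every nonzero a ∈ A there exists an ideal I of finite codimension with a ∉ I. -/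
/-!
`A` is Noetherian. For `a ≠ 0` choose a maximal ideal `m` containing the annihilator of `a`. By
Krull's intersection theorem an element of `⋂ mⁿ` satisfies `r a = a` for some `r ∈ m`; then
`1 - r` kills `a`, so `1 - r ∈ m`, which is absurd. Hence `a ∉ mⁿ` for some `n`. The ring `A ⧸ mⁿ`
is Noetherian of dimension zero, hence Artinian, and an Artinian finitely generated `k`-algebra is
finite dimensional (Nullstellensatz).
-/

namespace Ideal

variable {R : Type*} [CommRing R]

theorem exists_pow_notMem_of_torsionOf_le [IsNoetherianRing R] {m : Ideal R} {a : R}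
    (hm : m ≠ ⊤) (ha : torsionOf R R a ≤ m) : ∃ n : ℕ, a ∉ m ^ n := by
  by_contra! h
  have hmem : a ∈ (⨅ i : ℕ, m ^ i • ⊤ : Ideal R) := by
    simpa only [smul_eq_mul, mul_top, Submodule.mem_iInf] using h
  obtain ⟨r, hr⟩ := (m.mem_iInf_smul_pow_eq_bot_iff a).mp hmem
  have h1r : 1 - (r : R) ∈ m := ha <| by
    rw [mem_torsionOf_iff, sub_smul, one_smul, hr, sub_self]
  exact hm <| (eq_top_iff_one m).mpr <| by simpa using add_mem h1r r.2

theorem exists_isMaximal_pow_notMem [IsNoetherianRing R] {a : R} (ha : a ≠ 0) :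
    ∃ m : Ideal R, m.IsMaximal ∧ ∃ n : ℕ, a ∉ m ^ n := by
  obtain ⟨m, hm, hle⟩ := exists_le_maximal (torsionOf R R a)
    (fun h => ha (by simpa using (torsionOf_eq_top_iff R a).mp h))
  exact ⟨m, hm, exists_pow_notMem_of_torsionOf_le hm.ne_top hle⟩

theorem krullDimLE_zero_quotient_pow (m : Ideal R) [hm : m.IsMaximal] (n : ℕ) :
    Ring.KrullDimLE 0 (R ⧸ m ^ n) := by
  rw [krullDimLE_zero_quotient_iff_forall_minimalPrimes_isMaximal]
  intro J hJ
  have hJm : m = J := hm.eq_of_le hJ.1.1.ne_top (hJ.1.1.le_of_pow_le hJ.1.2)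
  exact hJm ▸ hm

end Ideal

theorem Module.finite_quotient_pow_of_isMaximal (k A : Type*) [Field k] [CommRing A]
    [Algebra k A] [Algebra.FiniteType k A] (m : Ideal A) [m.IsMaximal] (n : ℕ) :
    Module.Finite k (A ⧸ m ^ n) := by
  have := Algebra.FiniteType.isNoetherianRing k A
  have := m.krullDimLE_zero_quotient_pow n
  have : IsArtinianRing (A ⧸ m ^ n) := IsNoetherianRing.isArtinianRing_of_krullDimLE_zero
  exact Module.finite_of_isArtinianRing k (A ⧸ m ^ n)

/-- A commutative finitely generated algebra `A` over a field `k` is proper: its dual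
coalgebra `A^o` is dense in `A*`, equivalently the natural map `A → (A^o)*` is injective:
for every nonzero `a ∈ A` there is an ideal `I` of finite codimension with `a ∉ I`. -/
theorem commutative_finiteType_proper (k A : Type*) [Field k] [CommRing A] [Algebra k A]
    (hfg : Algebra.FiniteType k A) (a : A) (ha : a ≠ 0) :
    ∃ I : Ideal A, FiniteDimensional k (A ⧸ I) ∧ a ∉ I := by
  have := Algebra.FiniteType.isNoetherianRing k A
  obtain ⟨m, hm, n, hn⟩ := Ideal.exists_isMaximal_pow_notMem ha
  exact ⟨m ^ n, Module.finite_quotient_pow_of_isMaximal k A m n, hn⟩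
end
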